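/- Let a, b, k, k₁, k₂ be real numbers with a > 0, b > 0, k ≠ 0 and k² = (b·k₁² + a·k₂²)/(a + b). Let f : ℝ × ℝ → ℝ be smooth, and let S₀u, S₁u : ℝ × ℝ → ℝ be smooth functions of (ζ, t). Set S₀v = (a/b)·S₀u and S₁v = (a/b)·S₁u + (1/b)·((k² − k₁²)·S₀u_{ζζ} − f(S₀u, (a/b)·S₀u)). Assume the second-order solvability condition holds at every point: (k² − k₁²)·S₁u_{ζζ} − 2k·S₀u_{ζt} + (k² − k₂²)·S₁v_{ζζ} − 2k·S₀v_{ζt} = 0. Then, with K = (k² − k₂²)(k² − k₁²)/(2k(a + b)) and h(s) = ((k² − k₂²)/(2k(a + b)))·f(s, (a/b)·s), the function S₀u satisfies at every point: ∂_ζ( −S₀u_t + K·S₀u_{ζζζ} − ∂_ζ( h(S₀u) ) ) = 0. -/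

import Mathlib

noncomputable def pt (u : ℝ × ℝ → ℝ) : ℝ × ℝ → ℝ :=
  fun p => deriv (fun s => u (p.1, s)) p.2

noncomputable def pz (u : ℝ × ℝ → ℝ) : ℝ × ℝ → ℝ :=
  fun p => deriv (fun s => u (s, p.2)) p.1

lemma pz_eq_fderiv {u : ℝ × ℝ → ℝ} (hu : Differentiable ℝ u) :
    pz u = fun p => fderiv ℝ u p (1, 0) := by
  funext p
  have h1 : HasDerivAt (fun s : ℝ => (s, p.2)) ((1 : ℝ), (0 : ℝ)) p.1 :=
    (hasDerivAt_id p.1).prodMk (hasDerivAt_const _ _)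
  have := ((hu (p.1, p.2)).hasFDerivAt.comp_hasDerivAt p.1 h1)
  simpa [pz, Function.comp_def] using this.deriv

lemma pt_eq_fderiv {u : ℝ × ℝ → ℝ} (hu : Differentiable ℝ u) :
    pt u = fun p => fderiv ℝ u p (0, 1) := by
  funext p
  have h1 : HasDerivAt (fun s : ℝ => (p.1, s)) ((0 : ℝ), (1 : ℝ)) p.2 :=
    (hasDerivAt_const _ _).prodMk (hasDerivAt_id p.2)
  have := ((hu (p.1, p.2)).hasFDerivAt.comp_hasDerivAt p.2 h1)
  simpa [pt, Function.comp_def] using this.deriv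

lemma contDiff_pz {u : ℝ × ℝ → ℝ} (hu : ContDiff ℝ (⊤ : ℕ∞) u) : ContDiff ℝ (⊤ : ℕ∞) (pz u) := by
  rw [pz_eq_fderiv (hu.differentiable (by simp))]
  exact (hu.fderiv_right (by simp)).clm_apply contDiff_const

lemma contDiff_pt {u : ℝ × ℝ → ℝ} (hu : ContDiff ℝ (⊤ : ℕ∞) u) : ContDiff ℝ (⊤ : ℕ∞) (pt u) := by
  rw [pt_eq_fderiv (hu.differentiable (by simp))]
  exact (hu.fderiv_right (by simp)).clm_apply contDiff_const

lemma diff_slice_z {u : ℝ × ℝ → ℝ} (hu : Differentiable ℝ u) (c x : ℝ) :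
    DifferentiableAt ℝ (fun s => u (s, c)) x :=
  (hu _).comp x (differentiableAt_id.prodMk (differentiableAt_const c))

lemma pz_pt_comm {u : ℝ × ℝ → ℝ} (hu : ContDiff ℝ (⊤ : ℕ∞) u) (p : ℝ × ℝ) :
    pz (pt u) p = pt (pz u) p := by
  set f' := fderiv ℝ u with hf'
  have hdiff : Differentiable ℝ f' := (hu.fderiv_right (m := (⊤ : ℕ∞)) (by simp)).differentiable (by simp)
  have hder : ∀ y, HasFDerivAt u (f' y) y := fun y => (hu.differentiable (by simp) y).hasFDerivAt
  have hx : HasFDerivAt f' (fderiv ℝ f' p) p := (hdiff p).hasFDerivAt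
  have hsymm := second_derivative_symmetric hder hx ((1:ℝ),(0:ℝ)) ((0:ℝ),(1:ℝ))
  have d1 : HasFDerivAt (pt u)
      ((ContinuousLinearMap.apply ℝ ℝ ((0:ℝ), (1:ℝ))).comp (fderiv ℝ f' p)) p := by
    rw [pt_eq_fderiv (hu.differentiable (by simp))]
    exact (ContinuousLinearMap.apply ℝ ℝ ((0:ℝ),(1:ℝ))).hasFDerivAt.comp p hx
  have d2 : HasFDerivAt (pz u)
      ((ContinuousLinearMap.apply ℝ ℝ ((1:ℝ), (0:ℝ))).comp (fderiv ℝ f' p)) p := by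
    rw [pz_eq_fderiv (hu.differentiable (by simp))]
    exact (ContinuousLinearMap.apply ℝ ℝ ((1:ℝ),(0:ℝ))).hasFDerivAt.comp p hx
  have g1 : pz (pt u) p = fderiv ℝ f' p (1,0) (0,1) := by
    rw [pz_eq_fderiv ((contDiff_pt hu).differentiable (by simp))]
    simp [d1.fderiv]
  have g2 : pt (pz u) p = fderiv ℝ f' p (0,1) (1,0) := by
    rw [pt_eq_fderiv ((contDiff_pz hu).differentiable (by simp))]
    simp [d2.fderiv]
  rw [g1, g2, hsymm]

lemma pz_add {u v : ℝ × ℝ → ℝ} (hu : ContDiff ℝ (⊤ : ℕ∞) u) (hv : ContDiff ℝ (⊤ : ℕ∞) v) (p : ℝ × ℝ) :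
    pz (fun q => u q + v q) p = pz u p + pz v p := by
  simp only [pz]
  exact deriv_add (diff_slice_z (hu.differentiable (by simp)) p.2 p.1)
    (diff_slice_z (hv.differentiable (by simp)) p.2 p.1)

lemma pz_sub {u v : ℝ × ℝ → ℝ} (hu : ContDiff ℝ (⊤ : ℕ∞) u) (hv : ContDiff ℝ (⊤ : ℕ∞) v) (p : ℝ × ℝ) :
    pz (fun q => u q - v q) p = pz u p - pz v p := by
  simp only [pz]
  exact deriv_sub (diff_slice_z (hu.differentiable (by simp)) p.2 p.1)
    (diff_slice_z (hv.differentiable (by simp)) p.2 p.1)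

lemma pz_const_mul {u : ℝ × ℝ → ℝ} (c : ℝ) (p : ℝ × ℝ) :
    pz (fun q => c * u q) p = c * pz u p := by
  simp only [pz]
  exact deriv_const_mul_field c

lemma pt_const_mul {u : ℝ × ℝ → ℝ} (c : ℝ) (p : ℝ × ℝ) :
    pt (fun q => c * u q) p = c * pt u p := by
  simp only [pt]
  exact deriv_const_mul_field c

lemma pz_comb {u v w : ℝ × ℝ → ℝ} (hu : ContDiff ℝ (⊤ : ℕ∞) u) (hv : ContDiff ℝ (⊤ : ℕ∞) v)
    (hw : ContDiff ℝ (⊤ : ℕ∞) w) (K : ℝ) (p : ℝ × ℝ) :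
    pz (fun q => -u q + K * v q - w q) p = -pz u p + K * pz v p - pz w p := by
  simp only [pz]
  rw [deriv_fun_sub, deriv_fun_add, deriv.fun_neg, deriv_const_mul_field]
  · exact ((diff_slice_z (hu.differentiable (by simp)) p.2 p.1).neg)
  · exact (diff_slice_z (hv.differentiable (by simp)) p.2 p.1).const_mul K
  · exact ((diff_slice_z (hu.differentiable (by simp)) p.2 p.1).neg).add
      ((diff_slice_z (hv.differentiable (by simp)) p.2 p.1).const_mul K)
  · exact diff_slice_z (hw.differentiable (by simp)) p.2 p.1

theorem kdv_from_second_order_solvability_minus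
    (a b k k₁ k₂ : ℝ) (ha : 0 < a) (hb : 0 < b) (hk0 : k ≠ 0)
    (hk : k ^ 2 = (b * k₁ ^ 2 + a * k₂ ^ 2) / (a + b))
    (f : ℝ × ℝ → ℝ) (hf : ContDiff ℝ (⊤ : ℕ∞) f)
    (S₀u S₁u : ℝ × ℝ → ℝ) (hS₀u : ContDiff ℝ (⊤ : ℕ∞) S₀u) (hS₁u : ContDiff ℝ (⊤ : ℕ∞) S₁u)
    (S₀v : ℝ × ℝ → ℝ) (hS₀v : S₀v = fun p => (a / b) * S₀u p)
    (S₁v : ℝ × ℝ → ℝ)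
    (hS₁v : S₁v = fun p => (a / b) * S₁u p +
      (1 / b) * ((k ^ 2 - k₁ ^ 2) * pz (pz S₀u) p - f (S₀u p, (a / b) * S₀u p)))
    (hsolv : ∀ p : ℝ × ℝ,
      (k ^ 2 - k₁ ^ 2) * pz (pz S₁u) p - 2 * k * pt (pz S₀u) p +
        (k ^ 2 - k₂ ^ 2) * pz (pz S₁v) p - 2 * k * pt (pz S₀v) p = 0)
    (K : ℝ) (hK : K = (k ^ 2 - k₂ ^ 2) * (k ^ 2 - k₁ ^ 2) / (2 * k * (a + b)))
    (h : ℝ → ℝ)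
    (hh : ∀ s : ℝ, h s = ((k ^ 2 - k₂ ^ 2) / (2 * k * (a + b))) * f (s, (a / b) * s)) :
    ∀ p : ℝ × ℝ,
      pz (fun q => -pt S₀u q + K * pz (pz (pz S₀u)) q - pz (fun r => h (S₀u r)) q) p
        = 0 := by
  intro p
  have hab : a + b ≠ 0 := by positivity
  have hbne : b ≠ 0 := hb.ne'
  set c : ℝ := (k ^ 2 - k₂ ^ 2) / (2 * k * (a + b)) with hc
  set F : ℝ × ℝ → ℝ := fun q => f (S₀u q, (a / b) * S₀u q) with hF
  have hFc : ContDiff ℝ (⊤ : ℕ∞) F := hf.comp (hS₀u.prodMk (contDiff_const.mul hS₀u))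
  have hhc : (fun r => h (S₀u r)) = fun r => c * F r := by
    funext r; rw [hh]
  -- smoothness of iterated derivatives
  have h1 : ContDiff ℝ (⊤ : ℕ∞) (pz S₀u) := contDiff_pz hS₀u
  have h2 : ContDiff ℝ (⊤ : ℕ∞) (pz (pz S₀u)) := contDiff_pz h1
  have h3 : ContDiff ℝ (⊤ : ℕ∞) (pz (pz (pz S₀u))) := contDiff_pz h2
  have hFz : ContDiff ℝ (⊤ : ℕ∞) (pz F) := contDiff_pz hFc
  have hhS : ContDiff ℝ (⊤ : ℕ∞) (fun r => c * F r) := contDiff_const.mul hFc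
  have hhz : ContDiff ℝ (⊤ : ℕ∞) (pz (fun r => c * F r)) := contDiff_pz hhS
  -- step 1: expand the goal derivative
  have hgoal : pz (fun q => -pt S₀u q + K * pz (pz (pz S₀u)) q
        - pz (fun r => h (S₀u r)) q) p
      = -pz (pt S₀u) p + K * pz (pz (pz (pz S₀u))) p
        - pz (pz (fun r => h (S₀u r))) p := by
    rw [hhc]
    exact pz_comb (contDiff_pt hS₀u) h3 hhz K p
  rw [hgoal]
  -- second derivative of h ∘ S₀u
  have hcF : pz (fun r => c * F r) = fun r => c * pz F r := funext (pz_const_mul c)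
  have hhzz : pz (pz (fun r => h (S₀u r))) p = c * pz (pz F) p := by
    rw [hhc, hcF]; exact pz_const_mul c p
  -- Clairaut
  have hcomm : pz (pt S₀u) p = pt (pz S₀u) p := pz_pt_comm hS₀u p
  -- expand S₁v derivatives
  set W : ℝ × ℝ → ℝ := fun q => (k ^ 2 - k₁ ^ 2) * pz (pz S₀u) q - F q with hW
  have hWc : ContDiff ℝ (⊤ : ℕ∞) W := (contDiff_const.mul h2).sub hFc
  have hWz : pz W = fun q => (k ^ 2 - k₁ ^ 2) * pz (pz (pz S₀u)) q - pz F q := by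
    funext q
    rw [hW]
    rw [pz_sub (contDiff_const.mul h2) hFc q, pz_const_mul]
  have hWzz : pz (pz W) p = (k ^ 2 - k₁ ^ 2) * pz (pz (pz (pz S₀u))) p - pz (pz F) p := by
    rw [hWz]
    rw [pz_sub (contDiff_const.mul h3) hFz p, pz_const_mul]
  have hS₁v' : S₁v = fun q => (a / b) * S₁u q + (1 / b) * W q := hS₁v
  have hS₁vz : pz S₁v = fun q => (a / b) * pz S₁u q + (1 / b) * pz W q := by
    funext q
    rw [hS₁v']
    rw [pz_add (contDiff_const.mul hS₁u) (contDiff_const.mul hWc) q,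
      pz_const_mul, pz_const_mul]
  have hS₁vzz : pz (pz S₁v) p = (a / b) * pz (pz S₁u) p + (1 / b) * pz (pz W) p := by
    rw [hS₁vz]
    rw [pz_add (contDiff_const.mul (contDiff_pz hS₁u)) (contDiff_const.mul (contDiff_pz hWc)) p,
      pz_const_mul, pz_const_mul]
  -- S₀v derivatives
  have hS₀vz : pz S₀v = fun q => (a / b) * pz S₀u q := by
    funext q; rw [hS₀v]; exact pz_const_mul _ q
  have hS₀vzt : pt (pz S₀v) p = (a / b) * pt (pz S₀u) p := by
    rw [hS₀vz]; exact pt_const_mul _ p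
  -- the solvability condition, rewritten
  have E := hsolv p
  rw [hS₁vzz, hWzz, hS₀vzt] at E
  -- coefficient identity
  have hcoef : b * (k ^ 2 - k₁ ^ 2) + a * (k ^ 2 - k₂ ^ 2) = 0 := by
    field_simp at hk
    linear_combination hk
  -- finish by algebra
  rw [hhzz, hcomm, hK, hc]
  set A := pz (pz S₁u) p
  set B := pz (pz F) p
  set C := pt (pz S₀u) p
  set D := pz (pz (pz (pz S₀u))) p
  field_simp at E ⊢
  linear_combination E - A * hcoef
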